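/- arXiv:2008.09788 — 12 statements merged into one kernel-verified Lean document; each statement's English description precedes it below -/
import Mathlib

section
/- Let 𝒰 be an ultrafilter on ℕ and let p : ℕ → ℕ be a sequence of prime numbers which is an infinite prime relative to 𝒰 (i.e. for every natural number q the set {m | p m = q} is not in 𝒰). Then, taking the field structure on the quotient K = (∏_{m∈ℕ} ℤ) ⧸ (p,𝒰) coming from the maximality of the ideal (p,𝒰), the algebraic closure of K is isomorphic, as a ring, to the field ℂ of complex numbers. -/
/-!
`K` has characteristic zero and cardinality `𝔠`: an integer `n ≠ 0` cannot be divisible by `p m`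
once `p m > |n|`, and since `p m → ∞` along `𝒰`, the classes of `m ↦ ⌊x · p m⌋` for
`x ∈ [0, 1)` are pairwise distinct. Its algebraic closure is then an algebraically closed field
of characteristic zero and cardinality `𝔠`, hence isomorphic to `ℂ` by Steinitz's theorem.
-/

/-- The ideal `(p, 𝒰)` of the product ring `∏_{m ∈ ℕ} ℤ`, consisting of all `a` such that
`{m | p m ∣ a m} ∈ 𝒰`. -/
def pUIdeal (𝒰 : Ultrafilter ℕ) (p : ℕ → ℕ) : Ideal (ℕ → ℤ) where
  carrier := {a | {m | (p m : ℤ) ∣ a m} ∈ 𝒰}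
  zero_mem' := by
    simp only [Set.mem_setOf_eq, Pi.zero_apply, dvd_zero, Set.setOf_true]
    exact Filter.univ_mem
  add_mem' := by
    intro a b ha hb
    have := Filter.inter_mem ha hb
    refine Filter.mem_of_superset this ?_
    rintro m ⟨h1, h2⟩
    exact dvd_add h1 h2
  smul_mem' := by
    intro c a ha
    refine Filter.mem_of_superset ha ?_
    intro m hm
    exact Dvd.dvd.mul_left hm (c m)


open Filter Cardinal

theorem Ultrafilter.tendsto_atTop_of_forall_preimage_notMem {α : Type*} {𝒰 : Ultrafilter α}
    {p : α → ℕ} (h : ∀ q : ℕ, p ⁻¹' {q} ∉ 𝒰) : Tendsto p 𝒰 atTop := by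
  rw [← Nat.cofinite_eq_atTop]
  rcases (𝒰.map p).le_cofinite_or_eq_pure with hle | ⟨q, hq⟩
  · exact hle
  · refine absurd ?_ (h q)
    rw [← Ultrafilter.mem_map, hq]
    exact Ultrafilter.mem_pure.2 rfl

theorem AlgebraicClosure.cardinalMk_eq (K : Type*) [Field K] [Infinite K] :
    #(AlgebraicClosure K) = #K :=
  le_antisymm
    ((Algebra.IsAlgebraic.cardinalMk_le_max K _).trans_eq (max_eq_left (aleph0_le_mk K)))
    (mk_le_of_injective (algebraMap K (AlgebraicClosure K)).injective)

theorem nonempty_ringEquiv_complex_of_cardinalMk_eq_continuum (L : Type) [Field L]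
    [IsAlgClosed L] [CharZero L] (hL : #L = 𝔠) : Nonempty (L ≃+* ℂ) :=
  IsAlgClosed.ringEquiv_of_equiv_of_charZero (hL ▸ aleph0_lt_continuum)
    (Cardinal.eq.1 (hL.trans mk_complex.symm))

section pUIdeal

variable {𝒰 : Ultrafilter ℕ} {p : ℕ → ℕ}

theorem mem_pUIdeal_iff {a : ℕ → ℤ} : a ∈ pUIdeal 𝒰 p ↔ ∀ᶠ m in 𝒰, (p m : ℤ) ∣ a m :=
  Iff.rfl

theorem eventually_eq_zero_of_mem_pUIdeal {a : ℕ → ℤ} (ha : a ∈ pUIdeal 𝒰 p)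
    (hsmall : ∀ᶠ m in 𝒰, |a m| < p m) : ∀ᶠ m in 𝒰, a m = 0 :=
  ((mem_pUIdeal_iff.1 ha).and hsmall).mono fun _ h => Int.eq_zero_of_abs_lt_dvd h.1 h.2

theorem charZero_quotient_pUIdeal (hp : Tendsto p 𝒰 atTop) :
    CharZero ((ℕ → ℤ) ⧸ pUIdeal 𝒰 p) := by
  refine ⟨fun a b hab => ?_⟩
  have hmem : (fun _ => ((a : ℤ) - b)) ∈ pUIdeal 𝒰 p := by
    rw [← map_natCast (Ideal.Quotient.mk (pUIdeal 𝒰 p)) a,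
      ← map_natCast (Ideal.Quotient.mk (pUIdeal 𝒰 p)) b, Ideal.Quotient.eq] at hab
    exact hab
  have hsmall : ∀ᶠ m in 𝒰, |(a : ℤ) - b| < p m :=
    (hp.eventually_gt_atTop (a + b)).mono fun m hm => by rw [abs_lt]; omega
  obtain ⟨_, h⟩ := (eventually_eq_zero_of_mem_pUIdeal hmem hsmall).exists
  omega

theorem injective_mk_floor_mul (hp : Tendsto p 𝒰 atTop) :
    Function.Injective fun x : Set.Ico (0 : ℝ) 1 =>
      Ideal.Quotient.mk (pUIdeal 𝒰 p) fun m => ⌊(x : ℝ) * p m⌋ := by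
  rintro ⟨x, hx0, hx1⟩ ⟨y, hy0, hy1⟩ hxy
  have hpos : ∀ᶠ m in 𝒰, (0 : ℝ) < p m :=
    (hp.eventually_gt_atTop 0).mono fun _ h => Nat.cast_pos.2 h
  have floor_mul_mem {z : ℝ} (hz0 : 0 ≤ z) (hz1 : z < 1) {m : ℕ} (hm : (0 : ℝ) < p m) :
      0 ≤ ⌊z * p m⌋ ∧ ⌊z * p m⌋ < p m :=
    ⟨Int.floor_nonneg.2 (by positivity),
      Int.floor_lt.2 (by push_cast; nlinarith)⟩
  have hsmall : ∀ᶠ m in 𝒰, |⌊x * p m⌋ - ⌊y * p m⌋| < p m := hpos.mono fun m hm => by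
    obtain ⟨hx, hx'⟩ := floor_mul_mem hx0 hx1 hm
    obtain ⟨hy, hy'⟩ := floor_mul_mem hy0 hy1 hm
    rw [abs_lt]; constructor <;> linarith
  have hclose : ∀ᶠ m in 𝒰, |x - y| ≤ 1 / (p m : ℝ) :=
    ((eventually_eq_zero_of_mem_pUIdeal (Ideal.Quotient.eq.1 hxy) hsmall).and hpos).mono
      fun m ⟨heq, hm⟩ => by
        have h := Int.abs_sub_lt_one_of_floor_eq_floor (sub_eq_zero.1 heq)
        rw [← sub_mul, abs_mul, abs_of_pos hm] at h
        exact (le_div_iff₀ hm).2 h.le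
  have hlim : Tendsto (fun m => 1 / (p m : ℝ)) 𝒰 (nhds 0) :=
    tendsto_one_div_atTop_nhds_zero_nat.comp hp
  have hle : |x - y| ≤ 0 := ge_of_tendsto hlim hclose
  exact Subtype.ext (sub_eq_zero.1 (abs_nonpos_iff.1 hle))

theorem cardinalMk_quotient_pUIdeal (hp : Tendsto p 𝒰 atTop) :
    #((ℕ → ℤ) ⧸ pUIdeal 𝒰 p) = 𝔠 := by
  refine le_antisymm ?_ ?_
  · calc #((ℕ → ℤ) ⧸ pUIdeal 𝒰 p) ≤ #(ℕ → ℤ) :=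
        mk_le_of_surjective Ideal.Quotient.mk_surjective
      _ = 𝔠 := by rw [← power_def, mk_int, mk_nat, aleph0_power_aleph0]
  · calc 𝔠 = #(Set.Ico (0 : ℝ) 1) := (mk_Ico_real zero_lt_one).symm
      _ ≤ _ := mk_le_of_injective (injective_mk_floor_mul hp)

end pUIdeal

theorem algClosure_residueField_iso_complex_general (𝒰 : Ultrafilter ℕ) (p : ℕ → ℕ)
    (hinf : ∀ q : ℕ, {m | p m = q} ∉ 𝒰)
    (hmax : (pUIdeal 𝒰 p).IsMaximal) :
    haveI := hmax
    letI : Field ((ℕ → ℤ) ⧸ pUIdeal 𝒰 p) := Ideal.Quotient.field (pUIdeal 𝒰 p)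
    Nonempty (AlgebraicClosure ((ℕ → ℤ) ⧸ pUIdeal 𝒰 p) ≃+* ℂ) := by
  have := hmax
  let : Field ((ℕ → ℤ) ⧸ pUIdeal 𝒰 p) := Ideal.Quotient.field (pUIdeal 𝒰 p)
  have hp := Ultrafilter.tendsto_atTop_of_forall_preimage_notMem hinf
  have := charZero_quotient_pUIdeal hp
  have : Infinite ((ℕ → ℤ) ⧸ pUIdeal 𝒰 p) := Infinite.of_injective _ Nat.cast_injective
  exact nonempty_ringEquiv_complex_of_cardinalMk_eq_continuum _
    ((AlgebraicClosure.cardinalMk_eq _).trans (cardinalMk_quotient_pUIdeal hp))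

/-- If `p` is an infinite prime relative to the ultrafilter `𝒰` (i.e. no value is taken on a set
belonging to `𝒰`), then the algebraic closure of the nonstandard residue field
`(∏ ℤ) ⧸ (p, 𝒰)` (a field since `(p, 𝒰)` is maximal) is isomorphic, as a ring, to `ℂ`. -/
theorem algClosure_residueField_iso_complex (𝒰 : Ultrafilter ℕ) (p : ℕ → ℕ)
    (hp : ∀ m, (p m).Prime) (hinf : ∀ q : ℕ, {m | p m = q} ∉ 𝒰)
    (hmax : (pUIdeal 𝒰 p).IsMaximal) :
    haveI := hmax
    letI : Field ((ℕ → ℤ) ⧸ pUIdeal 𝒰 p) := Ideal.Quotient.field (pUIdeal 𝒰 p)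
    Nonempty (AlgebraicClosure ((ℕ → ℤ) ⧸ pUIdeal 𝒰 p) ≃+* ℂ) :=
  algClosure_residueField_iso_complex_general 𝒰 p hinf hmax
end

section
/- Let 𝒰 be an ultrafilter on ℕ and let p : ℕ → ℕ be a sequence of prime numbers which is an infinite prime relative to 𝒰 (i.e. for every natural number q the set {m | p m = q} is not in 𝒰). Then the cardinality of the quotient ring (∏_{m∈ℕ} ℤ) ⧸ (p,𝒰) equals the cardinality of the continuum 2^{ℵ₀}. -/
/-!
Truncating a bit sequence `s : ℕ → Fin 2` to its first `log₂ (p m)` bits gives a number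
`< p m` at every index `m`. Since `p m → ∞` along `𝒰`, two different bit sequences give
truncations that differ on a `𝒰`-large set, and numbers in `[0, p m)` that are congruent mod
`p m` are equal, so the residue classes of the truncations are pairwise distinct. This embeds
`2^ℕ` into the quotient, while `ℕ → ℤ` itself only has cardinality `2^ℵ₀`.
-/

open Filter

theorem Ultrafilter.tendsto_atTop_of_forall_fiber_notMem {α : Type*} {𝒰 : Ultrafilter α}
    {f : α → ℕ} (h : ∀ q, {a | f a = q} ∉ 𝒰) : Tendsto f 𝒰 atTop := by
  refine tendsto_atTop.2 fun q => ?_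
  have hsmall : {a | f a < q} = ⋃ j ∈ Set.Iio q, {a | f a = j} := by
    ext a; simp
  have hlarge : {a | f a < q}ᶜ ∈ 𝒰 := by
    rw [Ultrafilter.compl_mem_iff_notMem, hsmall,
      Ultrafilter.finite_biUnion_mem_iff (Set.finite_Iio q)]
    exact fun ⟨j, _, hj⟩ => h j hj
  filter_upwards [hlarge] with a ha
  exact not_lt.1 ha

theorem eventuallyEq_of_mk_pUIdeal_eq {𝒰 : Ultrafilter ℕ} {p a b : ℕ → ℕ}
    (ha : ∀ᶠ m in 𝒰, a m < p m) (hb : ∀ᶠ m in 𝒰, b m < p m)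
    (hab : Ideal.Quotient.mk (pUIdeal 𝒰 p) (fun m => (a m : ℤ)) =
      Ideal.Quotient.mk (pUIdeal 𝒰 p) (fun m => (b m : ℤ))) :
    a =ᶠ[𝒰] b := by
  have hdvd : ∀ᶠ m in 𝒰, (p m : ℤ) ∣ a m - b m := Ideal.Quotient.eq.1 hab
  filter_upwards [ha, hb, hdvd] with m ham hbm hm
  have hmod : b m ≡ a m [MOD p m] := Int.natCast_modEq_iff.1 (Int.modEq_iff_dvd.2 hm)
  rwa [Nat.ModEq, Nat.mod_eq_of_lt ham, Nat.mod_eq_of_lt hbm, eq_comm] at hmod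

theorem Nat.tendsto_log_two_atTop : Tendsto (Nat.log 2) atTop atTop :=
  Nat.log_monotone.tendsto_atTop_atTop fun n => ⟨2 ^ n, (Nat.log_pow one_lt_two n).ge⟩

/-- The number with binary digits `s 0, …, s (k m - 1)`. -/
def truncBinary (k : ℕ → ℕ) (s : ℕ → Fin 2) (m : ℕ) : ℕ :=
  finFunctionFinEquiv (fun i : Fin (k m) => s i)

theorem truncBinary_lt (k : ℕ → ℕ) (s : ℕ → Fin 2) (m : ℕ) : truncBinary k s m < 2 ^ k m :=
  (finFunctionFinEquiv _).isLt

theorem eq_of_truncBinary_eventuallyEq {l : Filter ℕ} [l.NeBot] {k : ℕ → ℕ}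
    (hk : Tendsto k l atTop) {s t : ℕ → Fin 2}
    (hst : truncBinary k s =ᶠ[l] truncBinary k t) : s = t := by
  funext i
  obtain ⟨m, hm, hi⟩ := (hst.and (tendsto_atTop.1 hk (i + 1))).exists
  have hfun := finFunctionFinEquiv.injective (Fin.ext hm)
  exact congrFun hfun ⟨i, hi⟩

theorem continuum_le_mk_quotient_pUIdeal {𝒰 : Ultrafilter ℕ} {p : ℕ → ℕ}
    (hp : Tendsto p 𝒰 atTop) : Cardinal.continuum ≤ Cardinal.mk ((ℕ → ℤ) ⧸ pUIdeal 𝒰 p) := by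
  set k := fun m => Nat.log 2 (p m)
  have hk : Tendsto k 𝒰 atTop := Nat.tendsto_log_two_atTop.comp hp
  have hlt (s : ℕ → Fin 2) : ∀ᶠ m in 𝒰, truncBinary k s m < p m := by
    filter_upwards [hp.eventually_ne_atTop 0] with m hm
    exact (truncBinary_lt k s m).trans_le (Nat.pow_log_le_self 2 hm)
  have hinj : Function.Injective fun s =>
      Ideal.Quotient.mk (pUIdeal 𝒰 p) (fun m => (truncBinary k s m : ℤ)) := fun s t hst =>
    eq_of_truncBinary_eventuallyEq hk (eventuallyEq_of_mk_pUIdeal_eq (hlt s) (hlt t) hst)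
  calc Cardinal.continuum = Cardinal.mk (ℕ → Fin 2) := by
        rw [Cardinal.mk_arrow, Cardinal.mk_fin, Cardinal.mk_nat, Cardinal.lift_aleph0,
          Cardinal.lift_id, Nat.cast_ofNat, Cardinal.two_power_aleph0]
    _ ≤ _ := Cardinal.mk_le_of_injective hinj

theorem mk_quotient_pUIdeal_le (𝒰 : Ultrafilter ℕ) (p : ℕ → ℕ) :
    Cardinal.mk ((ℕ → ℤ) ⧸ pUIdeal 𝒰 p) ≤ Cardinal.continuum := by
  refine Cardinal.mk_quotient_le.trans ?_
  rw [Cardinal.mk_arrow, Cardinal.mk_int, Cardinal.mk_nat, Cardinal.lift_aleph0,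
    Cardinal.power_self_eq le_rfl, Cardinal.two_power_aleph0]

theorem residueField_card_continuum_general (𝒰 : Ultrafilter ℕ) (p : ℕ → ℕ)
    (hinf : ∀ q : ℕ, {m | p m = q} ∉ 𝒰) :
    Cardinal.mk ((ℕ → ℤ) ⧸ pUIdeal 𝒰 p) = Cardinal.continuum :=
  (mk_quotient_pUIdeal_le 𝒰 p).antisymm
    (continuum_le_mk_quotient_pUIdeal (Ultrafilter.tendsto_atTop_of_forall_fiber_notMem hinf))

/-- If `p` is an infinite prime relative to the ultrafilter `𝒰`, then the nonstandard residue
field `(∏ ℤ) ⧸ (p, 𝒰)` has the cardinality of the continuum. -/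
theorem residueField_card_continuum (𝒰 : Ultrafilter ℕ) (p : ℕ → ℕ)
    (hp : ∀ m, (p m).Prime) (hinf : ∀ q : ℕ, {m | p m = q} ∉ 𝒰) :
    Cardinal.mk ((ℕ → ℤ) ⧸ pUIdeal 𝒰 p) = Cardinal.continuum :=
  residueField_card_continuum_general 𝒰 p hinf
end

section
/- Let F be a field of characteristic zero and let X, Y, Z, V, U, T be polynomials in F[t] satisfying X² − (T²−1)·Y² = 1, Y − (T−1)·Z = V, and V·U = 1. If T is not a constant polynomial, then there exists a natural number N such that Y = Y_N(T) or Y = −Y_N(T), where Y_N(T) = Σ_{k=0}^{⌊N/2⌋} binom(N, 2k+1)·(T²−1)^k·T^{N−1−2k}. -/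
open Polynomial

/-- `pellY N T = Σ_{k=0}^{⌊N/2⌋} binom(N, 2k+1) (T²−1)^k T^{N−1−2k}`, the second component of
`(T + R)^N = X_N + R·Y_N` where `R² = T² − 1`. -/
def pellY {A : Type*} [CommRing A] (N : ℕ) (T : A) : A :=
  ∑ k ∈ Finset.range (N / 2 + 1),
    (N.choose (2 * k + 1) : A) * (T ^ 2 - 1) ^ k * T ^ (N - 1 - 2 * k)

/-- `pellX N T = Σ_{k=0}^{⌊N/2⌋} binom(N, 2k) (T²−1)^k T^{N−2k}`, the first component of
`(T + R)^N = X_N + R·Y_N` where `R² = T² − 1`. -/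
def pellX {A : Type*} [CommRing A] (N : ℕ) (T : A) : A :=
  ∑ k ∈ Finset.range (N / 2 + 1),
    (N.choose (2 * k) : A) * (T ^ 2 - 1) ^ k * T ^ (N - 2 * k)

set_option linter.unusedSectionVars false

private lemma sum_range_even_odd {M : Type*} [AddCommMonoid M] (f : ℕ → M) (n : ℕ) :
    ∑ i ∈ Finset.range n, f i =
      (∑ i ∈ Finset.range ((n + 1) / 2), f (2 * i)) +
        ∑ i ∈ Finset.range (n / 2), f (2 * i + 1) := by
  induction n with
  | zero => simp
  | succ n ih =>
    rcases Nat.even_or_odd n with ⟨m, hm⟩ | ⟨m, hm⟩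
    · have e1 : (n + 1 + 1) / 2 = m + 1 := by omega
      have e2 : (n + 1) / 2 = m := by omega
      have e3 : n / 2 = m := by omega
      have e4 : n = 2 * m := by omega
      rw [Finset.sum_range_succ, ih, e1, e2, e3, Finset.sum_range_succ, e4]
      abel
    · have e1 : (n + 1 + 1) / 2 = m + 1 := by omega
      have e2 : (n + 1) / 2 = m + 1 := by omega
      have e3 : n / 2 = m := by omega
      have e4 : n = 2 * m + 1 := by omega
      rw [Finset.sum_range_succ, ih, e1, e2, e3, e4]
      rw [Finset.sum_range_succ (f := fun i => f (2 * i + 1))]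
      abel

private lemma pellY_alt {A : Type*} [CommRing A] (N : ℕ) (T : A) :
    pellY N T = ∑ k ∈ Finset.range ((N + 1) / 2),
      (N.choose (2 * k + 1) : A) * (T ^ 2 - 1) ^ k * T ^ (N - 1 - 2 * k) := by
  rcases Nat.even_or_odd N with ⟨m, hm⟩ | ⟨m, hm⟩
  · have e1 : N / 2 + 1 = m + 1 := by omega
    have e2 : (N + 1) / 2 = m := by omega
    have e3 : N.choose (2 * m + 1) = 0 := Nat.choose_eq_zero_of_lt (by omega)
    rw [pellY, e1, e2, Finset.sum_range_succ, e3]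
    simp
  · have e1 : N / 2 + 1 = m + 1 := by omega
    have e2 : (N + 1) / 2 = m + 1 := by omega
    rw [pellY, e1, e2]

private lemma pell_pow {B : Type*} [CommRing B] (T r : B) (h : r ^ 2 = T ^ 2 - 1) (N : ℕ) :
    (T + r) ^ N = pellX N T + pellY N T * r := by
  rw [add_comm T r, add_pow,
    sum_range_even_odd (fun k => r ^ k * T ^ (N - k) * (N.choose k : B)) (N + 1)]
  have e1 : (N + 1 + 1) / 2 = N / 2 + 1 := by omega
  rw [e1]
  congr 1
  · rw [pellX]
    refine Finset.sum_congr rfl fun k _ => ?_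
    rw [pow_mul, h]
    ring
  · rw [pellY_alt]
    rw [Finset.sum_mul]
    refine Finset.sum_congr rfl fun k _ => ?_
    have e2 : N - 2 * k = (N - 1 - 2 * k) + 1 ∨ N - 2 * k = 0 := by omega
    have e3 : N - (2 * k + 1) = N - 1 - 2 * k := by omega
    rw [e3, pow_succ, pow_mul, h]
    ring

section Adjoin

variable {A : Type*} [CommRing A] [Nontrivial A] (T : A)

private lemma map_pellX {B : Type*} [CommRing B] (g : A →+* B) (N : ℕ) (T : A) :
    g (pellX N T) = pellX N (g T) := by
  simp [pellX, map_sum, map_mul, map_pow, map_sub, map_one, map_natCast]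

private lemma map_pellY {B : Type*} [CommRing B] (g : A →+* B) (N : ℕ) (T : A) :
    g (pellY N T) = pellY N (g T) := by
  simp [pellY, map_sum, map_mul, map_pow, map_sub, map_one, map_natCast]

private lemma ext2 {a b a' b' : A}
    (h : AdjoinRoot.of (X ^ 2 - C (T ^ 2 - 1)) a
          + AdjoinRoot.of (X ^ 2 - C (T ^ 2 - 1)) b * AdjoinRoot.root (X ^ 2 - C (T ^ 2 - 1))
        = AdjoinRoot.of (X ^ 2 - C (T ^ 2 - 1)) a'
          + AdjoinRoot.of (X ^ 2 - C (T ^ 2 - 1)) b' * AdjoinRoot.root (X ^ 2 - C (T ^ 2 - 1))) :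
    a = a' ∧ b = b' := by
  set f : A[X] := X ^ 2 - C (T ^ 2 - 1) with hf
  have hmonic : f.Monic := monic_X_pow_sub_C _ (by norm_num)
  have hdf : f.degree = 2 := by
    simpa using degree_X_pow_sub_C (by norm_num : 0 < 2) (T ^ 2 - 1)
  have hm : ∀ x y : A, AdjoinRoot.of f x + AdjoinRoot.of f y * AdjoinRoot.root f
      = AdjoinRoot.mk f (C x + C y * X) := by
    intro x y
    rw [map_add, map_mul, AdjoinRoot.mk_C, AdjoinRoot.mk_C, AdjoinRoot.mk_X]
  rw [hm, hm] at h
  have hdeg : ∀ x y : A, (C x + C y * X : A[X]).degree < f.degree := by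
    intro x y
    rw [hdf]
    refine lt_of_le_of_lt (degree_add_le _ _) (max_lt ?_ ?_)
    · exact lt_of_le_of_lt degree_C_le (by decide)
    · refine lt_of_le_of_lt (degree_mul_le _ _) ?_
      refine lt_of_le_of_lt (add_le_add degree_C_le degree_X_le) (by decide)
  have h2 := congrArg (AdjoinRoot.modByMonicHom hmonic) h
  rw [AdjoinRoot.modByMonicHom_mk, AdjoinRoot.modByMonicHom_mk,
    (modByMonic_eq_self_iff hmonic).2 (hdeg a b),
    (modByMonic_eq_self_iff hmonic).2 (hdeg a' b')] at h2
  constructor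
  · have := congrArg (fun p => Polynomial.coeff p 0) h2
    simpa using this
  · have := congrArg (fun p => Polynomial.coeff p 1) h2
    simpa using this

private lemma root_sq :
    (AdjoinRoot.root (X ^ 2 - C (T ^ 2 - 1))) ^ 2
      = (AdjoinRoot.of (X ^ 2 - C (T ^ 2 - 1)) T) ^ 2 - 1 := by
  set f : A[X] := X ^ 2 - C (T ^ 2 - 1) with hf
  have h : AdjoinRoot.mk f (X ^ 2 - C (T ^ 2 - 1)) = 0 := by
    rw [← hf]; exact AdjoinRoot.mk_self
  rw [map_sub, map_pow, AdjoinRoot.mk_X, AdjoinRoot.mk_C, sub_eq_zero] at h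
  rw [h, map_sub, map_pow, map_one]

private lemma pell_succ (N : ℕ) :
    pellX (N + 1) T = T * pellX N T + (T ^ 2 - 1) * pellY N T ∧
      pellY (N + 1) T = pellX N T + T * pellY N T := by
  set f : A[X] := X ^ 2 - C (T ^ 2 - 1) with hf
  set r := AdjoinRoot.root f with hr
  set og : A →+* AdjoinRoot f := AdjoinRoot.of f with hog
  have hrsq : r ^ 2 = (og T) ^ 2 - 1 := root_sq T
  have h1 := pell_pow (og T) r hrsq (N + 1)
  have h2 := pell_pow (og T) r hrsq N
  have key : og (pellX (N + 1) T) + og (pellY (N + 1) T) * r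
      = og (T * pellX N T + (T ^ 2 - 1) * pellY N T)
        + og (pellX N T + T * pellY N T) * r := by
    rw [map_pellX, map_pellY, ← h1, pow_succ, h2]
    rw [map_add, map_add, map_mul, map_mul, map_mul, map_pellX, map_pellY, map_sub,
      map_pow, map_one]
    linear_combination pellY N (og T) * hrsq
  exact ext2 T key

private lemma pell_norm (N : ℕ) :
    pellX N T ^ 2 - (T ^ 2 - 1) * pellY N T ^ 2 = 1 := by
  set f : A[X] := X ^ 2 - C (T ^ 2 - 1) with hf
  set r := AdjoinRoot.root f with hr
  set og : A →+* AdjoinRoot f := AdjoinRoot.of f with hog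
  have hrsq : r ^ 2 = (og T) ^ 2 - 1 := root_sq T
  have h1 := pell_pow (og T) r hrsq N
  have h2 := pell_pow (og T) (-r) (by rw [neg_pow]; simpa using hrsq) N
  have key : og (pellX N T ^ 2 - (T ^ 2 - 1) * pellY N T ^ 2) + og 0 * r
      = og 1 + og 0 * r := by
    rw [map_zero, zero_mul, add_zero, add_zero, map_one, map_sub, map_mul, map_pow, map_pow,
      map_pellX, map_pellY, map_sub, map_pow, map_one]
    calc pellX N (og T) ^ 2 - ((og T) ^ 2 - 1) * pellY N (og T) ^ 2
        = (pellX N (og T) + pellY N (og T) * r) * (pellX N (og T) + pellY N (og T) * (-r)) := by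
          linear_combination (pellY N (og T) ^ 2) * hrsq
      _ = ((og T + r) * (og T + -r)) ^ N := by rw [← h1, ← h2, ← mul_pow]
      _ = 1 := by
          have e2 : (og T + r) * (og T + -r) = 1 := by linear_combination -hrsq
          rw [e2, one_pow]
  exact (ext2 T key).1

private lemma pellX_zero : pellX 0 T = 1 := by norm_num [pellX, Finset.sum_range_one]

private lemma pellY_zero : pellY 0 T = 0 := by norm_num [pellY, Finset.sum_range_one]

private lemma pellX_one : pellX 1 T = T := by norm_num [pellX, Finset.sum_range_one]

private lemma pellY_one : pellY 1 T = 1 := by norm_num [pellY, Finset.sum_range_one]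

private lemma pell_step (N : ℕ) (X' Y' : A)
    (hX : X' = pellX N T ∨ X' = -pellX N T) (hY : Y' = pellY N T ∨ Y' = -pellY N T) :
    ∃ M, (T * X' + (T ^ 2 - 1) * Y' = pellX M T ∨ T * X' + (T ^ 2 - 1) * Y' = -pellX M T) ∧
      (X' + T * Y' = pellY M T ∨ X' + T * Y' = -pellY M T) := by
  rcases hX with hX | hX <;> rcases hY with hY | hY
  · obtain ⟨hsX, hsY⟩ := pell_succ T N
    exact ⟨N + 1, Or.inl (by rw [hX, hY, hsX]), Or.inl (by rw [hX, hY, hsY])⟩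
  · cases N with
    | zero =>
      refine ⟨1, Or.inl ?_, Or.inl ?_⟩
      · rw [hX, hY, pellX_zero, pellY_zero, pellX_one]; ring
      · rw [hX, hY, pellX_zero, pellY_zero, pellY_one]; ring
    | succ M =>
      obtain ⟨hsX, hsY⟩ := pell_succ T M
      refine ⟨M, Or.inl ?_, Or.inr ?_⟩
      · rw [hX, hY, hsX, hsY]; ring
      · rw [hX, hY, hsX, hsY]; ring
  · cases N with
    | zero =>
      refine ⟨1, Or.inr ?_, Or.inr ?_⟩
      · rw [hX, hY, pellX_zero, pellY_zero, pellX_one]; ring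
      · rw [hX, hY, pellX_zero, pellY_zero, pellY_one]; ring
    | succ M =>
      obtain ⟨hsX, hsY⟩ := pell_succ T M
      refine ⟨M, Or.inr ?_, Or.inl ?_⟩
      · rw [hX, hY, hsX, hsY]; ring
      · rw [hX, hY, hsX, hsY]; ring
  · obtain ⟨hsX, hsY⟩ := pell_succ T N
    exact ⟨N + 1, Or.inr (by rw [hX, hY, hsX]; ring), Or.inr (by rw [hX, hY, hsY]; ring)⟩

end Adjoin

private lemma descent {F : Type*} [Field F] [CharZero F] (T : Polynomial F)
    (hT : 0 < T.natDegree) :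
    ∀ n (X Y : Polynomial F), Y.natDegree < n → X ^ 2 - (T ^ 2 - 1) * Y ^ 2 = 1 →
      ∃ N, (X = pellX N T ∨ X = -pellX N T) ∧ (Y = pellY N T ∨ Y = -pellY N T) := by
  have hTne : T ≠ 0 := fun h => by simp [h] at hT
  have hdne : (T ^ 2 - 1 : Polynomial F) ≠ 0 := by
    intro h
    have h2 : (T ^ 2 : Polynomial F) = 1 := by linear_combination h
    have h3 := natDegree_pow T 2
    rw [h2, natDegree_one] at h3; omega
  have hddeg : (T ^ 2 - 1 : Polynomial F).natDegree = 2 * T.natDegree := by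
    rw [sub_eq_add_neg, natDegree_add_eq_left_of_natDegree_lt
      (by rw [natDegree_neg, natDegree_one, natDegree_pow]; omega), natDegree_pow]
  have hdlc : (T ^ 2 - 1 : Polynomial F).leadingCoeff = T.leadingCoeff ^ 2 := by
    rw [sub_eq_add_neg, add_comm, leadingCoeff_add_of_degree_lt
      (degree_lt_degree (by rw [natDegree_neg, natDegree_one, natDegree_pow]; omega)),
      leadingCoeff_pow]
  intro n
  induction n with
  | zero => intro X Y h; omega
  | succ n ih =>
    intro X Y hYn h1
    by_cases hY0 : Y = 0
    · subst hY0
      have hX2 : (X - 1) * (X + 1) = 0 := by linear_combination h1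
      refine ⟨0, ?_, Or.inl (pellY_zero T).symm⟩
      rcases mul_eq_zero.1 hX2 with h | h
      · exact Or.inl (by rw [sub_eq_zero] at h; rw [h, pellX_zero])
      · exact Or.inr (by rw [add_eq_zero_iff_eq_neg] at h; rw [h, pellX_zero])
    by_cases hYc : Y.natDegree = 0
    · by_cases hY2 : Y ^ 2 = 1
      · have hYpm : (Y - 1) * (Y + 1) = 0 := by linear_combination hY2
        have hX2 : (X - T) * (X + T) = 0 := by linear_combination h1 + (T ^ 2 - 1) * hY2
        refine ⟨1, ?_, ?_⟩
        · rcases mul_eq_zero.1 hX2 with h | h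
          · exact Or.inl (by rw [sub_eq_zero] at h; rw [h, pellX_one])
          · exact Or.inr (by rw [add_eq_zero_iff_eq_neg] at h; rw [h, pellX_one])
        · rcases mul_eq_zero.1 hYpm with h | h
          · exact Or.inl (by rw [sub_eq_zero] at h; rw [h, pellY_one])
          · exact Or.inr (by rw [add_eq_zero_iff_eq_neg] at h; rw [h, pellY_one])
      · exfalso
        have hprod : (X - Y * T) * (X + Y * T) = 1 - Y ^ 2 := by linear_combination h1
        have hne : (1 : Polynomial F) - Y ^ 2 ≠ 0 := by
          intro h; apply hY2; linear_combination -h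
        have hP : X - Y * T ≠ 0 := fun h => hne (by rw [← hprod, h, zero_mul])
        have hQ : X + Y * T ≠ 0 := fun h => hne (by rw [← hprod, h, mul_zero])
        have hdeg0 : (1 - Y ^ 2 : Polynomial F).natDegree = 0 := by
          have h2 : (Y ^ 2).natDegree = 0 := by rw [natDegree_pow, hYc]
          have h3 := natDegree_sub_le (1 : Polynomial F) (Y ^ 2)
          rw [natDegree_one, h2] at h3
          omega
        have hsum := natDegree_mul hP hQ
        rw [hprod, hdeg0] at hsum
        have hle := natDegree_sub_le (X + Y * T) (X - Y * T)
        have hmul : ((2 : Polynomial F) * Y * T).natDegree = T.natDegree := by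
          rw [natDegree_mul (mul_ne_zero two_ne_zero hY0) hTne,
            natDegree_mul (two_ne_zero) hY0, hYc]
          simp
        have he : (X + Y * T) - (X - Y * T) = 2 * Y * T := by ring
        rw [he, hmul] at hle
        have hq0 : (X + Y * T).natDegree = 0 := by omega
        have hp0 : (X - Y * T).natDegree = 0 := by omega
        rw [hq0, hp0] at hle
        simp at hle
        omega
    · have hYd : 0 < Y.natDegree := Nat.pos_of_ne_zero hYc
      have hkey : X ^ 2 = 1 + (T ^ 2 - 1) * Y ^ 2 := by linear_combination h1
      have hY2ne : Y ^ 2 ≠ 0 := pow_ne_zero _ hY0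
      have hdY2 : ((T ^ 2 - 1) * Y ^ 2).natDegree = 2 * T.natDegree + 2 * Y.natDegree := by
        rw [natDegree_mul hdne hY2ne, hddeg, natDegree_pow]
      have hlt1 : (1 : Polynomial F).natDegree < ((T ^ 2 - 1) * Y ^ 2).natDegree := by
        rw [natDegree_one, hdY2]; omega
      have hdX2 : (X ^ 2).natDegree = 2 * T.natDegree + 2 * Y.natDegree := by
        rw [hkey, natDegree_add_eq_right_of_natDegree_lt hlt1, hdY2]
      have hX0 : X ≠ 0 := by
        intro h; rw [h] at hdX2; simp at hdX2; omega
      have hdX : X.natDegree = T.natDegree + Y.natDegree := by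
        have h2 := natDegree_pow X 2; omega
      have hlc2 : X.leadingCoeff ^ 2 = (T.leadingCoeff * Y.leadingCoeff) ^ 2 := by
        have e1 : (X ^ 2).leadingCoeff = X.leadingCoeff ^ 2 := leadingCoeff_pow X 2
        have e2 : ((1 : Polynomial F) + (T ^ 2 - 1) * Y ^ 2).leadingCoeff
            = ((T ^ 2 - 1) * Y ^ 2).leadingCoeff :=
          leadingCoeff_add_of_degree_lt (degree_lt_degree hlt1)
        rw [← e1, hkey, e2, leadingCoeff_mul, leadingCoeff_pow, hdlc]; ring
      have hfac : (X.leadingCoeff - T.leadingCoeff * Y.leadingCoeff) *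
          (X.leadingCoeff + T.leadingCoeff * Y.leadingCoeff) = 0 := by linear_combination hlc2
      obtain ⟨X', hX'lc, hX'X, hX'0, hX'deg, hX'sq⟩ :
          ∃ X' : Polynomial F, X'.leadingCoeff = T.leadingCoeff * Y.leadingCoeff ∧
            (X = X' ∨ X = -X') ∧ X' ≠ 0 ∧ X'.natDegree = T.natDegree + Y.natDegree ∧
            X' ^ 2 - (T ^ 2 - 1) * Y ^ 2 = 1 := by
        rcases mul_eq_zero.1 hfac with h | h
        · exact ⟨X, by linear_combination h, Or.inl rfl, hX0, hdX, h1⟩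
        · refine ⟨-X, ?_, Or.inr (neg_neg X).symm, neg_ne_zero.2 hX0,
            by rw [natDegree_neg]; exact hdX, by linear_combination h1⟩
          rw [leadingCoeff_neg]; linear_combination -h
      set Y' := T * Y - X' with hY'
      set X'' := T * X' - (T ^ 2 - 1) * Y with hX''
      have hsol : X'' ^ 2 - (T ^ 2 - 1) * Y' ^ 2 = 1 := by
        rw [hX'', hY']; linear_combination hX'sq
      have hdTY : (T * Y).natDegree = T.natDegree + Y.natDegree := natDegree_mul hTne hY0
      have hcoeffW : (T * Y + X').coeff (T.natDegree + Y.natDegree)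
          = 2 * (T.leadingCoeff * Y.leadingCoeff) := by
        rw [coeff_add]
        have c1 : (T * Y).coeff (T.natDegree + Y.natDegree)
            = T.leadingCoeff * Y.leadingCoeff := by
          conv_lhs => rw [← hdTY]
          rw [coeff_natDegree, leadingCoeff_mul]
        have c2 : X'.coeff (T.natDegree + Y.natDegree) = T.leadingCoeff * Y.leadingCoeff := by
          conv_lhs => rw [← hX'deg]
          rw [coeff_natDegree, hX'lc]
        rw [c1, c2]; ring
      have hlcY : Y.leadingCoeff ≠ 0 := leadingCoeff_ne_zero.2 hY0
      have hlcT : T.leadingCoeff ≠ 0 := leadingCoeff_ne_zero.2 hTne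
      have hcne : (2 : F) * (T.leadingCoeff * Y.leadingCoeff) ≠ 0 :=
        mul_ne_zero two_ne_zero (mul_ne_zero hlcT hlcY)
      have hWne : T * Y + X' ≠ 0 := by
        intro h
        rw [h, coeff_zero] at hcoeffW
        exact hcne hcoeffW.symm
      have hWdeg : (T * Y + X').natDegree = T.natDegree + Y.natDegree := by
        apply le_antisymm
        · refine le_trans (natDegree_add_le _ _) ?_
          rw [hdTY, hX'deg, max_self]
        · exact le_natDegree_of_ne_zero (by rw [hcoeffW]; exact hcne)
      have hprod : Y' * (T * Y + X') = Y ^ 2 - 1 := by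
        rw [hY']; linear_combination -hX'sq
      have hdY21 : (Y ^ 2 - 1 : Polynomial F).natDegree = 2 * Y.natDegree := by
        rw [sub_eq_add_neg, natDegree_add_eq_left_of_natDegree_lt
          (by rw [natDegree_neg, natDegree_one, natDegree_pow]; omega), natDegree_pow]
      have hY2ne1 : (Y ^ 2 - 1 : Polynomial F) ≠ 0 := by
        intro h
        rw [h, natDegree_zero] at hdY21; omega
      have hY'ne : Y' ≠ 0 := fun h => hY2ne1 (by rw [← hprod, h, zero_mul])
      have hsum := natDegree_mul hY'ne hWne
      rw [hprod, hWdeg, hdY21] at hsum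
      have hY'lt : Y'.natDegree < n := by omega
      obtain ⟨N, hXN, hYN⟩ := ih X'' Y' hY'lt hsol
      have hrecX : X' = T * X'' + (T ^ 2 - 1) * Y' := by rw [hX'', hY']; ring
      have hrecY : Y = X'' + T * Y' := by rw [hX'', hY']; ring
      obtain ⟨M, hM1, hM2⟩ := pell_step T N X'' Y' hXN hYN
      refine ⟨M, ?_, by rw [hrecY]; exact hM2⟩
      rw [← hrecX] at hM1
      rcases hX'X with h | h <;> rcases hM1 with h2 | h2
      · exact Or.inl (by rw [h, h2])
      · exact Or.inr (by rw [h, h2])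
      · exact Or.inr (by rw [h, h2])
      · exact Or.inl (by rw [h, h2, neg_neg])

/-- For a solution of system (2) in `F[t]` (`F` of characteristic zero) with `T` nonconstant,
`Y = ±Y_N(T)` for some natural number `N`. -/
theorem solution_Y_eq_pellY {F : Type*} [Field F] [CharZero F]
    (X Y Z V U T : Polynomial F)
    (h1 : X ^ 2 - (T ^ 2 - 1) * Y ^ 2 = 1)
    (h2 : Y - (T - 1) * Z = V)
    (h3 : V * U = 1)
    (hT : 0 < T.natDegree) :
    ∃ N : ℕ, Y = pellY N T ∨ Y = -pellY N T := by
  obtain ⟨N, _, hY⟩ := descent T hT (Y.natDegree + 1) X Y (Nat.lt_succ_self _) h1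
  exact ⟨N, hY⟩
end

section
/- Let F be a field of characteristic zero, and let c ∈ F with c ≠ 1 and c ≠ −1. If X, Y, Z, V, U ∈ F[t] satisfy X² − (c²−1)·Y² = 1, Y − (c−1)·Z = V, and V·U = 1 (i.e. system (2) with T the constant polynomial c), then Y and Z are constant polynomials. -/
/-!
Since `c ≠ ±1`, the first equation is a Pell equation `X² - d Y² = 1` over `F[t]` with a nonzero
constant `d = c² - 1`. Differentiating gives `X X' = d Y Y'`; as `X` and `Y` are coprime, `X ∣ Y'`.
If `Y` were nonconstant then `deg X = deg Y > deg Y'`, forcing `Y' = 0`, which in characteristic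
zero contradicts `Y` nonconstant. Then `V` is a unit, hence constant, and `(c - 1) Z = Y - V` is
constant.
-/

open Polynomial

namespace Polynomial

variable {F : Type*} [Field F] {d : F} {X Y : F[X]}

theorem natDegree_eq_of_sq_sub_C_mul_sq_eq_one (hd : d ≠ 0) (h : X ^ 2 - C d * Y ^ 2 = 1) :
    X.natDegree = Y.natDegree := by
  have hX : X ^ 2 = C d * Y ^ 2 + 1 := by linear_combination h
  have hdeg : (C d * Y ^ 2).natDegree = 2 * Y.natDegree := by
    rw [natDegree_C_mul hd, natDegree_pow]
  suffices 2 * X.natDegree = 2 * Y.natDegree by omega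
  rw [← natDegree_pow, hX]
  rcases Nat.eq_zero_or_pos Y.natDegree with hY | hY
  · rw [hY, Nat.mul_zero, ← Nat.le_zero]
    exact natDegree_add_le_of_degree_le (by omega) (by simp)
  · rw [natDegree_add_eq_left_of_natDegree_lt (by rw [hdeg]; simpa), hdeg]

theorem mul_derivative_eq_of_sq_sub_C_mul_sq_eq_one [CharZero F] (h : X ^ 2 - C d * Y ^ 2 = 1) :
    X * derivative X = C d * Y * derivative Y := by
  have h' := congrArg derivative h
  simp only [derivative_sub, derivative_mul, derivative_sq, derivative_C, derivative_one,
    map_ofNat] at h'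
  apply mul_left_cancel₀ (two_ne_zero : (2 : F[X]) ≠ 0)
  linear_combination h'

theorem dvd_derivative_of_sq_sub_C_mul_sq_eq_one [CharZero F] (hd : d ≠ 0)
    (h : X ^ 2 - C d * Y ^ 2 = 1) : X ∣ derivative Y := by
  have hcop : IsCoprime X Y := ⟨X, -(C d * Y), by linear_combination h⟩
  have : X ∣ Y * (C d * derivative Y) :=
    ⟨derivative X, by linear_combination -mul_derivative_eq_of_sq_sub_C_mul_sq_eq_one h⟩
  exact (isUnit_C.mpr hd.isUnit).dvd_mul_left.mp (hcop.dvd_of_dvd_mul_left this)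

theorem derivative_eq_zero_of_sq_sub_C_mul_sq_eq_one [CharZero F] (hd : d ≠ 0)
    (h : X ^ 2 - C d * Y ^ 2 = 1) : derivative Y = 0 := by
  by_contra hY'
  have hY : Y.natDegree ≠ 0 := fun h0 => hY' (by rw [eq_C_of_natDegree_eq_zero h0, derivative_C])
  have := natDegree_le_of_dvd (dvd_derivative_of_sq_sub_C_mul_sq_eq_one hd h) hY'
  have := natDegree_derivative_lt hY
  have := natDegree_eq_of_sq_sub_C_mul_sq_eq_one hd h
  omega

end Polynomial

/-- For a solution of system (2) in `F[t]` (`F` of characteristic zero) with `T` a constant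
`c ≠ ±1`, the polynomials `Y` and `Z` are constants. -/
theorem solution_const_T {F : Type*} [Field F] [CharZero F]
    (c : F) (hc1 : c ≠ 1) (hc2 : c ≠ -1)
    (X Y Z V U : Polynomial F)
    (h1 : X ^ 2 - ((C c) ^ 2 - 1) * Y ^ 2 = 1)
    (h2 : Y - (C c - 1) * Z = V)
    (h3 : V * U = 1) :
    (∃ a, Y = C a) ∧ (∃ b, Z = C b) := by
  have hc : c - 1 ≠ 0 := sub_ne_zero.mpr hc1
  have hd : c ^ 2 - 1 ≠ 0 := sub_ne_zero.mpr (sq_ne_one_iff.mpr ⟨hc1, hc2⟩)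
  have hpell : X ^ 2 - C (c ^ 2 - 1) * Y ^ 2 = 1 := by rwa [map_sub, map_pow, map_one]
  obtain ⟨a, ha⟩ : ∃ a, Y = C a :=
    ⟨_, eq_C_of_derivative_eq_zero (derivative_eq_zero_of_sq_sub_C_mul_sq_eq_one hd hpell)⟩
  obtain ⟨v, -, rfl⟩ := Polynomial.isUnit_iff.mp (IsUnit.of_mul_eq_one U h3)
  have hZ : C (c - 1) * Z = C (a - v) := by
    rw [map_sub, map_sub, map_one]
    linear_combination ha - h2
  refine ⟨⟨a, ha⟩, ⟨(a - v) / (c - 1), mul_left_cancel₀ (C_ne_zero.mpr hc) ?_⟩⟩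
  rw [hZ, ← C_mul, mul_div_cancel₀ _ hc]
end

section
/- Let d ≥ 1 and let X, Y, Z, U, V : Fin d → ℝ[t] and T, S ∈ ℝ[t] satisfy, for every i: (X i)² − (T²−1)·(Y i)² = 1, (Y i) − (T−1)·(Z i) = V i, (V i)·(U i) = 1, together with T = S² + 2. Then either all of S, T and all X i, Y i, Z i, U i, V i are constant polynomials, or for every i there exists a nonzero integer N_i such that V i is the constant polynomial with value N_i. -/
open Polynomial

/-!
If `S = C s` is constant, then `T = C q` with `q = s² + 2`, and `q² - 1 = r²` for a real `r ≠ 0`,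
so `(X - rY)(X + rY) = 1` makes both factors, hence `X` and `Y`, constants; the other two equations
then make `Z`, `U`, `V` constant.

If `S` is not constant, `T` has positive degree. For a solution of the Pell equation
`x² - (T² - 1)y² = 1` with `y ≠ 0`, one of `(Tx ∓ (T² - 1)y, Ty ∓ x)` is again a solution, with
`y` of smaller degree; descending to `y = 0, x = ±1` shows `x ≡ a` and `y ≡ n (mod T - 1)` for
integers `a, n`. The unit `V = C v` satisfies `V ≡ Y (mod T - 1)`, so `C (v - n)` is divisible by
the nonconstant `T - 1`, i.e. `v = n`.
-/

namespace Polynomial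

variable {R : Type*} [CommRing R]

theorem pell_descend {t x y : R[X]} (h : x ^ 2 - (t ^ 2 - 1) * y ^ 2 = 1) :
    (t * x - (t ^ 2 - 1) * y) ^ 2 - (t ^ 2 - 1) * (t * y - x) ^ 2 = 1 := by
  linear_combination h

theorem pell_dvd_sub_intCast_of_descend {t x y : R[X]} {a n : ℤ}
    (hx : t - 1 ∣ t * x - (t ^ 2 - 1) * y - a) (hy : t - 1 ∣ t * y - x - n) :
    (t - 1 ∣ x - a) ∧ (t - 1 ∣ y - (n + a : ℤ)) := by
  constructor
  · have : x - a = (t * x - (t ^ 2 - 1) * y - a) - (t - 1) * (x - (t + 1) * y) := by ring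
    exact this ▸ dvd_sub hx (dvd_mul_right _ _)
  · have : y - (n + a : ℤ) = (t * y - x - n) + (t * x - (t ^ 2 - 1) * y - a) -
        (t - 1) * (x - t * y) := by push_cast; ring
    exact this ▸ dvd_sub (dvd_add hy hx) (dvd_mul_right _ _)

section Domain

variable [IsDomain R]

theorem exists_eq_C_of_mul_eq_one {p q : R[X]} (h : p * q = 1) : ∃ c, IsUnit c ∧ p = C c := by
  obtain ⟨c, hc, rfl⟩ := isUnit_iff.mp (IsUnit.of_mul_eq_one q h)
  exact ⟨c, hc, rfl⟩

theorem eq_of_dvd_C_sub_C {p : R[X]} (hp : 0 < p.natDegree) {a b : R} (h : p ∣ C a - C b) :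
    a = b := by
  rw [← map_sub] at h
  exact sub_eq_zero.mp (C_eq_zero.mp (eq_zero_of_dvd_of_natDegree_lt h (by rwa [natDegree_C])))

/-- The two candidates multiply to `y² - 1` and add to `2ty`, so they cannot both have degree
at least `deg y`. -/
theorem pell_degree_descend {t x y : R[X]} (h2 : (2 : R) ≠ 0) (ht : 0 < t.natDegree) (hy : y ≠ 0)
    (h : x ^ 2 - (t ^ 2 - 1) * y ^ 2 = 1) :
    degree (t * y - x) < degree y ∨ degree (t * y + x) < degree y := by
  by_contra! ⟨h₁, h₂⟩
  have hne : ∀ {p : R[X]}, degree y ≤ degree p → p ≠ 0 := fun hp h0 => by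
    rw [h0, degree_zero, le_bot_iff, degree_eq_bot] at hp; exact hy hp
  have hprod : (t * y - x) * (t * y + x) = y ^ 2 - 1 := by linear_combination -h
  have hsum : (t * y - x) + (t * y + x) = C 2 * t * y := by rw [map_ofNat]; ring
  have hdeg_prod : (t * y - x).natDegree + (t * y + x).natDegree ≤ 2 * y.natDegree := by
    rw [← natDegree_mul (hne h₁) (hne h₂), hprod]
    exact (natDegree_sub_le _ _).trans (by simp)
  have hdeg_sum : t.natDegree + y.natDegree ≤
      max (t * y - x).natDegree (t * y + x).natDegree := by
    have := natDegree_add_le (t * y - x) (t * y + x)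
    rwa [hsum, natDegree_mul (mul_ne_zero (C_ne_zero.mpr h2) (ne_zero_of_natDegree_gt ht)) hy,
      natDegree_C_mul h2] at this
  have := natDegree_le_natDegree h₁
  have := natDegree_le_natDegree h₂
  omega

theorem pell_exists_int_dvd_sub {t : R[X]} (h2 : (2 : R) ≠ 0) (ht : 0 < t.natDegree) (y : R[X]) :
    ∀ {x : R[X]}, x ^ 2 - (t ^ 2 - 1) * y ^ 2 = 1 →
      ∃ a n : ℤ, (t - 1 ∣ x - a) ∧ (t - 1 ∣ y - n) := by
  induction y using degree_lt_wf.induction with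
  | _ y ih =>
    intro x h
    by_cases hy : y = 0
    · have hx : x * x = 1 := by rw [hy] at h; linear_combination h
      rcases mul_self_eq_one_iff.mp hx with rfl | rfl
      · exact ⟨1, 0, by simp, by simp [hy]⟩
      · exact ⟨-1, 0, by simp, by simp [hy]⟩
    rcases pell_degree_descend h2 ht hy h with hlt | hlt
    · obtain ⟨a, n, hx, hy⟩ := ih _ hlt (pell_descend h)
      exact ⟨a, n + a, pell_dvd_sub_intCast_of_descend hx hy⟩
    · -- the first case, for `-x` in place of `x`
      have h' : (-x) ^ 2 - (t ^ 2 - 1) * y ^ 2 = 1 := by linear_combination h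
      rw [← sub_neg_eq_add] at hlt
      obtain ⟨a, n, hx, hy⟩ := ih _ hlt (pell_descend h')
      obtain ⟨hx, hy⟩ := pell_dvd_sub_intCast_of_descend hx hy
      refine ⟨-a, n + a, ?_, hy⟩
      simpa [neg_sub_left, add_comm] using hx.neg_right

theorem system_exists_int_of_natDegree_pos {t x y z u v : R[X]} (h2 : (2 : R) ≠ 0)
    (ht : 0 < t.natDegree) (h₁ : x ^ 2 - (t ^ 2 - 1) * y ^ 2 = 1) (h₂ : y - (t - 1) * z = v)
    (h₃ : v * u = 1) : ∃ N : ℤ, N ≠ 0 ∧ v = C (N : R) := by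
  obtain ⟨c, hc, rfl⟩ := exists_eq_C_of_mul_eq_one h₃
  obtain ⟨-, N, -, hN⟩ := pell_exists_int_dvd_sub h2 ht y h₁
  have hdvd : t - 1 ∣ C c - C (N : R) := by
    rw [map_intCast, ← h₂, sub_right_comm]
    exact dvd_sub hN (dvd_mul_right _ _)
  have hcN : c = N := eq_of_dvd_C_sub_C (by rwa [← C_1, natDegree_sub_C]) hdvd
  refine ⟨N, ?_, by rw [hcN]⟩
  rintro rfl
  exact hc.ne_zero (by simpa using hcN)

end Domain

section Field

variable {K : Type*} [Field K]

theorem eq_C_div_of_C_mul_eq_C {a b : K} (ha : a ≠ 0) {p : K[X]} (h : C a * p = C b) :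
    p = C (b / a) := by
  rw [div_eq_inv_mul, map_mul, ← h, ← mul_assoc, ← map_mul, inv_mul_cancel₀ ha, map_one, one_mul]

theorem pell_constant_of_C_sq {r : K} (h2 : (2 : K) ≠ 0) (hr : r ≠ 0) {x y : K[X]}
    (h : x ^ 2 - C (r ^ 2) * y ^ 2 = 1) : (∃ a, x = C a) ∧ (∃ b, y = C b) := by
  have hfac : (x - C r * y) * (x + C r * y) = 1 := by rw [map_pow] at h; linear_combination h
  obtain ⟨a, -, ha⟩ := exists_eq_C_of_mul_eq_one hfac
  obtain ⟨b, -, hb⟩ := exists_eq_C_of_mul_eq_one ((mul_comm _ _).trans hfac)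
  have hx : C 2 * x = C (a + b) := by rw [map_add, map_ofNat]; linear_combination ha + hb
  have hy : C (2 * r) * y = C (b - a) := by
    rw [map_sub, map_mul, map_ofNat]; linear_combination hb - ha
  exact ⟨⟨_, eq_C_div_of_C_mul_eq_C h2 hx⟩, ⟨_, eq_C_div_of_C_mul_eq_C (mul_ne_zero h2 hr) hy⟩⟩

theorem system_constant_of_eq_C {q r : K} (h2 : (2 : K) ≠ 0) (hr : r ≠ 0) (hqr : q ^ 2 - 1 = r ^ 2)
    {x y z u v : K[X]} (h₁ : x ^ 2 - (C q ^ 2 - 1) * y ^ 2 = 1) (h₂ : y - (C q - 1) * z = v)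
    (h₃ : v * u = 1) :
    (∃ c, x = C c) ∧ (∃ c, y = C c) ∧ (∃ c, z = C c) ∧ (∃ c, u = C c) ∧ (∃ c, v = C c) := by
  rw [← map_pow, ← map_one C, ← map_sub, hqr] at h₁
  obtain ⟨hx, b, rfl⟩ := pell_constant_of_C_sq h2 hr h₁
  obtain ⟨c, -, rfl⟩ := exists_eq_C_of_mul_eq_one h₃
  obtain ⟨e, -, rfl⟩ := exists_eq_C_of_mul_eq_one ((mul_comm _ _).trans h₃)
  have hq : q - 1 ≠ 0 := by
    intro hq1
    rw [sub_eq_zero.mp hq1, one_pow, sub_self, eq_comm, sq_eq_zero_iff] at hqr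
    exact hr hqr
  have hz : C (q - 1) * z = C (b - c) := by
    rw [map_sub, map_sub, map_one]; linear_combination -h₂
  exact ⟨hx, ⟨b, rfl⟩, ⟨_, eq_C_div_of_C_mul_eq_C hq hz⟩, ⟨e, rfl⟩, ⟨c, rfl⟩⟩

end Field

end Polynomial

theorem real_system_dichotomy_general (d : ℕ)
    (X Y Z U V : Fin d → Polynomial ℝ) (T S : Polynomial ℝ)
    (h1 : ∀ i, (X i) ^ 2 - (T ^ 2 - 1) * (Y i) ^ 2 = 1)
    (h2 : ∀ i, (Y i) - (T - 1) * (Z i) = V i)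
    (h3 : ∀ i, (V i) * (U i) = 1)
    (h4 : T = S ^ 2 + 2) :
    ((∃ c, S = C c) ∧ (∃ c, T = C c) ∧
      ∀ i, (∃ c, X i = C c) ∧ (∃ c, Y i = C c) ∧ (∃ c, Z i = C c) ∧
        (∃ c, U i = C c) ∧ (∃ c, V i = C c)) ∨
      (∀ i, ∃ N : ℤ, N ≠ 0 ∧ V i = C ((N : ℤ) : ℝ)) := by
  by_cases hS : ∃ c, S = C c
  · obtain ⟨s, rfl⟩ := hS
    have hT : T = C (s ^ 2 + 2) := by rw [h4, map_add, map_pow, map_ofNat]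
    subst hT
    have hq : 0 < (s ^ 2 + 2) ^ 2 - 1 := by nlinarith [sq_nonneg s]
    refine .inl ⟨⟨s, rfl⟩, ⟨_, rfl⟩, fun i => system_constant_of_eq_C two_ne_zero
      (Real.sqrt_ne_zero'.mpr hq) (Real.sq_sqrt hq.le).symm (h1 i) (h2 i) (h3 i)⟩
  · have hS' : S.natDegree ≠ 0 := fun h => hS (by simpa [eq_comm] using natDegree_eq_zero.mp h)
    have hT : 0 < T.natDegree := by
      rw [h4, ← map_ofNat C 2, natDegree_add_C, natDegree_pow]
      omega
    exact .inr fun i => system_exists_int_of_natDegree_pos two_ne_zero hT (h1 i) (h2 i) (h3 i)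

/-- For a solution over `ℝ[t]` of system (1) augmented by `T = S² + 2`, either all of `S`, `T`
and all `X i, Y i, Z i, U i, V i` are constants, or every `V i` is the constant polynomial with
value a nonzero integer `N i`. -/
theorem real_system_dichotomy (d : ℕ) (hd : 1 ≤ d)
    (X Y Z U V : Fin d → Polynomial ℝ) (T S : Polynomial ℝ)
    (h1 : ∀ i, (X i) ^ 2 - (T ^ 2 - 1) * (Y i) ^ 2 = 1)
    (h2 : ∀ i, (Y i) - (T - 1) * (Z i) = V i)
    (h3 : ∀ i, (V i) * (U i) = 1)
    (h4 : T = S ^ 2 + 2) :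
    ((∃ c, S = C c) ∧ (∃ c, T = C c) ∧
      ∀ i, (∃ c, X i = C c) ∧ (∃ c, Y i = C c) ∧ (∃ c, Z i = C c) ∧
        (∃ c, U i = C c) ∧ (∃ c, V i = C c)) ∨
      (∀ i, ∃ N : ℤ, N ≠ 0 ∧ V i = C ((N : ℤ) : ℝ)) :=
  real_system_dichotomy_general d X Y Z U V T S h1 h2 h3 h4
end

section
/- Let A be a commutative ring, T ∈ A, and N a natural number. Set X_N(T) = Σ_{k=0}^{⌊N/2⌋} binom(N, 2k)·(T²−1)^k·T^{N−2k} and Y_N(T) = Σ_{k=0}^{⌊N/2⌋} binom(N, 2k+1)·(T²−1)^k·T^{N−1−2k}. Then X_N(T)² − (T²−1)·Y_N(T)² = 1, and (T − 1) divides Y_N(T) − N·1 in A. -/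
open Polynomial

/-- Recurrence: `Y_{N+1} = X_N + T·Y_N`. -/
lemma pellY_succ {A : Type*} [CommRing A] (T : A) (N : ℕ) :
    pellY (N + 1) T = pellX N T + T * pellY N T := by
  unfold pellX pellY
  rw [Finset.mul_sum]
  have h1 : Finset.range ((N+1)/2 + 1) ⊆ Finset.range (N/2 + 2) :=
    Finset.range_subset_range.2 (by omega)
  have h2 : Finset.range (N/2 + 1) ⊆ Finset.range (N/2 + 2) :=
    Finset.range_subset_range.2 (by omega)
  rw [Finset.sum_subset h1 (fun k hk hk' => by
        simp only [Finset.mem_range] at hk hk'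
        have : N + 1 < 2*k+1 := by omega
        simp [Nat.choose_eq_zero_of_lt this]),
      Finset.sum_subset h2 (fun k hk hk' => by
        simp only [Finset.mem_range] at hk hk'
        have : N < 2*k := by omega
        simp [Nat.choose_eq_zero_of_lt this]),
      Finset.sum_subset h2 (fun k hk hk' => by
        simp only [Finset.mem_range] at hk hk'
        have : N < 2*k+1 := by omega
        simp [Nat.choose_eq_zero_of_lt this]),
      ← Finset.sum_add_distrib]
  apply Finset.sum_congr rfl
  intro k _
  rw [Nat.choose_succ_succ (n := N) (k := 2*k)]
  have he : N + 1 - 1 - 2*k = N - 2*k := by omega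
  rw [he]
  push_cast
  rcases le_or_gt (2*k+1) N with h | h
  · have : N - 2*k = (N - 1 - 2*k) + 1 := by omega
    rw [this, pow_succ]
    ring
  · rw [Nat.choose_eq_zero_of_lt h]
    push_cast
    ring

/-- Recurrence: `X_{N+1} = T·X_N + (T²−1)·Y_N`. -/
lemma pellX_succ {A : Type*} [CommRing A] (T : A) (N : ℕ) :
    pellX (N + 1) T = T * pellX N T + (T^2 - 1) * pellY N T := by
  have h1 : Finset.range ((N+1)/2 + 1) ⊆ Finset.range (N/2 + 2) :=
    Finset.range_subset_range.2 (by omega)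
  have h2 : Finset.range (N/2) ⊆ Finset.range (N/2 + 1) :=
    Finset.range_subset_range.2 (by omega)
  have hL : pellX (N+1) T =
      (∑ k ∈ Finset.range (N/2+1),
        ((N.choose (2*k+1) : A) + (N.choose (2*k+2) : A)) * (T^2-1)^(k+1) * T^(N-1-2*k))
        + T^(N+1) := by
    unfold pellX
    rw [Finset.sum_subset h1 (fun k hk hk' => by
        simp only [Finset.mem_range] at hk hk'
        have : N + 1 < 2*k := by omega
        simp [Nat.choose_eq_zero_of_lt this]),
      Finset.sum_range_succ' _ (N/2+1)]
    congr 1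
    · apply Finset.sum_congr rfl
      intro k _
      rw [show 2*(k+1) = (2*k+1)+1 by ring, Nat.choose_succ_succ,
        show N+1-((2*k+1)+1) = N-1-2*k by omega]
      push_cast
      ring
    · simp
  have hR1 : T * pellX N T =
      (∑ k ∈ Finset.range (N/2+1),
        (N.choose (2*k+2) : A) * (T^2-1)^(k+1) * T^(N-1-2*k)) + T^(N+1) := by
    unfold pellX
    rw [Finset.mul_sum, Finset.sum_range_succ' _ (N/2),
      Finset.sum_subset h2 (fun k hk hk' => by
        simp only [Finset.mem_range] at hk hk'
        have : N < 2*(k+1) := by omega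
        simp [Nat.choose_eq_zero_of_lt this])]
    congr 1
    · apply Finset.sum_congr rfl
      intro k _
      rw [show 2*(k+1) = 2*k+2 by ring]
      rcases le_or_gt (2*k+2) N with h | h
      · rw [show N-1-2*k = (N-(2*k+2))+1 by omega, pow_succ]
        ring
      · rw [Nat.choose_eq_zero_of_lt h]
        push_cast
        ring
    · simp [pow_succ]
      ring
  have hR2 : (T^2 - 1) * pellY N T =
      ∑ k ∈ Finset.range (N/2+1),
        (N.choose (2*k+1) : A) * (T^2-1)^(k+1) * T^(N-1-2*k) := by
    unfold pellY
    rw [Finset.mul_sum]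
    apply Finset.sum_congr rfl
    intro k _
    rw [pow_succ]
    ring
  rw [hL, hR1, hR2, add_right_comm, ← Finset.sum_add_distrib]
  congr 1
  apply Finset.sum_congr rfl
  intro k _
  ring

/-- The Pell identity `X_N(T)² − (T² − 1)·Y_N(T)² = 1` holds in any commutative ring, and
`T − 1` divides `Y_N(T) − N·1`. -/
theorem pell_identity_and_congruence {A : Type*} [CommRing A] (T : A) (N : ℕ) :
    pellX N T ^ 2 - (T ^ 2 - 1) * pellY N T ^ 2 = 1 ∧
      (T - 1) ∣ (pellY N T - (N : A)) := by
  suffices h : pellX N T ^ 2 - (T ^ 2 - 1) * pellY N T ^ 2 = 1 ∧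
      (T - 1) ∣ (pellX N T - 1) ∧ (T - 1) ∣ (pellY N T - (N : A)) by
    exact ⟨h.1, h.2.2⟩
  induction N with
  | zero => refine ⟨by simp [pellX, pellY], by simp [pellX], by simp [pellY]⟩
  | succ n ih =>
    obtain ⟨hid, ⟨a, ha⟩, ⟨b, hb⟩⟩ := ih
    refine ⟨?_, ⟨T*a + 1 + (T+1) * pellY n T, ?_⟩, ⟨a + T*b + n, ?_⟩⟩
    · rw [pellX_succ, pellY_succ]
      linear_combination hid
    · rw [pellX_succ]
      linear_combination T * ha + pellY n T * (by ring : (T:A)^2 - 1 = (T-1)*(T+1))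
    · rw [pellY_succ]
      push_cast
      linear_combination ha + T * hb
end

section
/- Let s ≥ 1 and let N : Fin s → ℤ be nonzero integers. In ℝ[t], set S = t and T = t² + 2. Then there exist polynomials X, Y, Z : Fin s → ℝ[t] such that, taking V i to be the constant polynomial N i and U i the constant polynomial (N i)⁻¹, for every i: (X i)² − (T²−1)·(Y i)² = 1, (Y i) − (T−1)·(Z i) = V i, and (V i)·(U i) = 1. In particular the system (1) together with T = S² + 2 has a solution with T nonconstant whose V-coordinates are the prescribed nonzero integers. -/
open Polynomial

noncomputable def Tq : Polynomial ℝ := Polynomial.X ^ 2 + 2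

/-- (X_n, Y_n, Z_n, W_n) with Pell recursion and divisibility witnesses. -/
noncomputable def quad : ℕ → Polynomial ℝ × Polynomial ℝ × Polynomial ℝ × Polynomial ℝ
  | 0 => (1, 0, 0, 0)
  | n+1 =>
    let q := quad n
    (Tq * q.1 + (Tq ^ 2 - 1) * q.2.1,
     q.1 + Tq * q.2.1,
     q.2.2.2 + C (n : ℝ) + Tq * q.2.2.1,
     Tq * q.2.2.2 + 1 + (Tq + 1) * q.2.1)

lemma quad_spec (n : ℕ) :
    (quad n).1 ^ 2 - (Tq ^ 2 - 1) * (quad n).2.1 ^ 2 = 1 ∧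
    (quad n).2.1 = C (n : ℝ) + (Tq - 1) * (quad n).2.2.1 ∧
    (quad n).1 = 1 + (Tq - 1) * (quad n).2.2.2 := by
  induction n with
  | zero => simp [quad]
  | succ n ih =>
    obtain ⟨h1, h2, h3⟩ := ih
    refine ⟨?_, ?_, ?_⟩
    · show (Tq * (quad n).1 + (Tq ^ 2 - 1) * (quad n).2.1) ^ 2 -
        (Tq ^ 2 - 1) * ((quad n).1 + Tq * (quad n).2.1) ^ 2 = 1
      linear_combination (Tq ^ 2 - (Tq ^ 2 - 1)) * h1
    · show (quad n).1 + Tq * (quad n).2.1 =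
        C ((n + 1 : ℕ) : ℝ) + (Tq - 1) * ((quad n).2.2.2 + C (n : ℝ) + Tq * (quad n).2.2.1)
      push_cast
      rw [h3, h2]
      ring_nf
      simp [C_add, C_1]
      ring
    · show Tq * (quad n).1 + (Tq ^ 2 - 1) * (quad n).2.1 =
        1 + (Tq - 1) * (Tq * (quad n).2.2.2 + 1 + (Tq + 1) * (quad n).2.1)
      linear_combination Tq * h3

/-- For any prescribed nonzero integers `N i`, the system (1) with `S = t`, `T = t² + 2` has a
solution in `ℝ[t]` whose `V`-coordinates are the constants `N i` (and `U i = (N i)⁻¹`). -/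
theorem real_system_solution (s : ℕ) (hs : 1 ≤ s) (N : Fin s → ℤ) (hN : ∀ i, N i ≠ 0) :
    ∃ X Y Z : Fin s → Polynomial ℝ,
      ∀ i,
        (X i) ^ 2 - (((Polynomial.X : Polynomial ℝ) ^ 2 + 2) ^ 2 - 1) * (Y i) ^ 2 = 1 ∧
        (Y i) - (((Polynomial.X : Polynomial ℝ) ^ 2 + 2) - 1) * (Z i) = C ((N i : ℤ) : ℝ) ∧
        C ((N i : ℤ) : ℝ) * C (((N i : ℤ) : ℝ))⁻¹ = 1 := by
  refine ⟨fun i => (quad (N i).natAbs).1,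
    fun i => (if 0 ≤ N i then 1 else -1) * (quad (N i).natAbs).2.1,
    fun i => (if 0 ≤ N i then 1 else -1) * (quad (N i).natAbs).2.2.1, fun i => ?_⟩
  obtain ⟨h1, h2, h3⟩ := quad_spec (N i).natAbs
  have hT : Tq = (Polynomial.X : Polynomial ℝ) ^ 2 + 2 := rfl
  refine ⟨?_, ?_, ?_⟩
  · rw [← hT]
    by_cases h : 0 ≤ N i <;> simp [h] <;> linear_combination h1
  · rw [← hT]
    by_cases h : 0 ≤ N i
    · have hc : (((N i).natAbs : ℕ) : ℝ) = ((N i : ℤ) : ℝ) := by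
        rw [← Int.cast_natCast, Int.natAbs_of_nonneg h]
      rw [hc] at h2
      simp only [if_pos h, one_mul]
      linear_combination h2
    · have hc : (((N i).natAbs : ℕ) : ℝ) = -((N i : ℤ) : ℝ) := by
        rw [← Int.cast_natCast, show (((N i).natAbs : ℕ) : ℤ) = -(N i) from by omega,
          Int.cast_neg]
      rw [hc, map_neg] at h2
      simp only [if_neg h, neg_one_mul]
      linear_combination -h2
  · rw [← C_mul, mul_inv_cancel₀ (by exact_mod_cast hN i), C_1]
end

section
/- Let R be a (not necessarily commutative) ring of characteristic p, where p is a prime number, and let δ : R → R be an additive map satisfying the Leibniz rule δ(x·y) = δ(x)·y + x·δ(y) for all x, y ∈ R. Let a ∈ R and define ad_a : R → R by ad_a(x) = a·x − x·a. If (ad_a)^D (δ a) = 0 for some natural number D with D ≤ p − 1, then δ(a^p) = 0. -/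
/-!
Expanding `δ (a ^ p)` by the Leibniz rule gives `∑ i < p, a ^ i * δ a * a ^ (p - 1 - i)`. Writing
`ad_a = L_a - R_a` as a difference of the commuting left and right multiplications, the binomial
theorem together with `(-1) ^ m * (p - 1).choose m ≡ 1 [MOD p]` shows that `ad_a ^ (p - 1)` is
exactly this sum of the operators `L_a ^ i * R_a ^ (p - 1 - i)`. Hence
`δ (a ^ p) = ad_a ^ (p - 1) (δ a)`, which vanishes as soon as `ad_a ^ D (δ a)` does for `D ≤ p - 1`.
-/

open Finset

theorem Nat.cast_choose_pred_eq_neg_one_pow {S : Type*} [Ring S] {p : ℕ} (hp : p.Prime)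
    (hpS : (p : S) = 0) {m : ℕ} (hm : m < p) : ((p - 1).choose m : S) = (-1) ^ m := by
  induction m with
  | zero => simp
  | succ k ih =>
    have hpascal : (p - 1).choose k + (p - 1).choose (k + 1) = p.choose (k + 1) := by
      rw [← Nat.choose_succ_succ', Nat.sub_add_cancel hp.one_le]
    have hchoose : (p.choose (k + 1) : S) = 0 := by
      obtain ⟨c, hc⟩ := hp.dvd_choose_self k.succ_ne_zero hm
      rw [hc, Nat.cast_mul, hpS, zero_mul]
    have hsum := congrArg (Nat.cast : ℕ → S) hpascal
    rw [Nat.cast_add, hchoose, ih (by omega)] at hsum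
    rw [pow_succ, mul_neg_one, eq_neg_of_add_eq_zero_right hsum]

theorem Commute.sub_pow_pred_eq_sum {S : Type*} [Ring S] {p : ℕ} (hp : p.Prime)
    (hpS : (p : S) = 0) {x y : S} (h : Commute x y) :
    (x - y) ^ (p - 1) = ∑ i ∈ range p, x ^ i * y ^ (p - 1 - i) := by
  have hsign : (-1 : S) ^ (p - 1) = 1 := by
    rw [← Nat.cast_choose_pred_eq_neg_one_pow hp hpS (Nat.sub_lt hp.pos one_pos), Nat.choose_self,
      Nat.cast_one]
  rw [sub_eq_add_neg, h.neg_right.add_pow, Nat.sub_add_cancel hp.one_le]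
  refine sum_congr rfl fun m hm => ?_
  replace hm := mem_range.mp hm
  rw [Nat.cast_choose_pred_eq_neg_one_pow hp hpS hm, neg_pow, mul_assoc, mul_assoc,
    ← ((Commute.neg_one_left y).pow_pow _ _).eq, ← mul_assoc ((-1) ^ _), ← pow_add,
    Nat.sub_add_cancel (by omega), hsign, one_mul]

theorem iterate_ad_pred_eq_sum {R : Type*} [Ring R] {p : ℕ} (hp : p.Prime) [CharP R p]
    (a x : R) :
    (fun y : R => a * y - y * a)^[p - 1] x = ∑ i ∈ range p, a ^ i * x * a ^ (p - 1 - i) := by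
  have hp0 : (p : Module.End ℤ R) = 0 := by
    ext y
    rw [Module.End.natCast_apply, nsmul_eq_mul, CharP.cast_eq_zero, zero_mul, LinearMap.zero_apply]
  have had : (fun y : R => a * y - y * a) = ⇑(LinearMap.mulLeft ℤ a - LinearMap.mulRight ℤ a) :=
    rfl
  rw [had, ← Module.End.coe_pow, (LinearMap.commute_mulLeft_right a a).sub_pow_pred_eq_sum hp hp0]
  simp [LinearMap.pow_mulLeft, LinearMap.pow_mulRight, LinearMap.sum_apply, mul_assoc]

theorem pow_eq_sum_of_leibniz {R : Type*} [Ring R] {δ : R → R}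
    (hleib : ∀ x y : R, δ (x * y) = δ x * y + x * δ y) (a : R) (n : ℕ) :
    δ (a ^ n) = ∑ i ∈ range n, a ^ i * δ a * a ^ (n - 1 - i) := by
  induction n with
  | zero => simpa using hleib 1 1
  | succ n ih =>
    rw [pow_succ, hleib, ih, sum_mul, sum_range_succ, Nat.add_sub_cancel, Nat.sub_self, pow_zero,
      mul_one]
    congr 1
    refine sum_congr rfl fun i hi => ?_
    replace hi := mem_range.mp hi
    rw [mul_assoc, ← pow_succ, Nat.sub_right_comm, Nat.sub_add_cancel (by omega)]

theorem derivation_pth_power_vanishes_general {R : Type*} [Ring R] (p : ℕ) (hp : p.Prime)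
    [CharP R p] (δ : R → R)
    (hleib : ∀ x y : R, δ (x * y) = δ x * y + x * δ y)
    (a : R) (D : ℕ) (hD : D ≤ p - 1)
    (h : (fun x : R => a * x - x * a)^[D] (δ a) = 0) :
    δ (a ^ p) = 0 := by
  have hpred : (fun x : R => a * x - x * a)^[p - 1] (δ a) = 0 := by
    rw [← Nat.sub_add_cancel hD, Function.iterate_add_apply, h]
    exact Function.iterate_fixed (by simp) _
  rw [pow_eq_sum_of_leibniz hleib, ← iterate_ad_pred_eq_sum hp, hpred]

/-- Let `R` be a ring of prime characteristic `p` and `δ : R → R` an additive map satisfying the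
Leibniz rule. If `ad_a^D (δ a) = 0` for some `D ≤ p − 1`, where `ad_a x = a·x − x·a`, then
`δ (a^p) = 0`. -/
theorem derivation_pth_power_vanishes {R : Type*} [Ring R] (p : ℕ) (hp : p.Prime)
    [CharP R p] (δ : R → R)
    (hadd : ∀ x y : R, δ (x + y) = δ x + δ y)
    (hleib : ∀ x y : R, δ (x * y) = δ x * y + x * δ y)
    (a : R) (D : ℕ) (hD : D ≤ p - 1)
    (h : (fun x : R => a * x - x * a)^[D] (δ a) = 0) :
    δ (a ^ p) = 0 :=
  derivation_pth_power_vanishes_general p hp δ hleib a D hD h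
end

section
/- Let 𝒰 be an ultrafilter on ℕ and let p : ℕ → ℕ be a sequence of prime numbers. Then the ideal (p,𝒰) = {a ∈ ∏_{m∈ℕ} ℤ | {m | p m ∣ a m} ∈ 𝒰} is a maximal ideal of the product ring ∏_{m∈ℕ} ℤ. -/
/-- If `p : ℕ → ℕ` is a sequence of prime numbers and `𝒰` is an ultrafilter on `ℕ`, then the
ideal `(p, 𝒰)` is a maximal ideal of the product ring `∏_{m ∈ ℕ} ℤ`. -/
theorem pUIdeal_isMaximal (𝒰 : Ultrafilter ℕ) (p : ℕ → ℕ) (hp : ∀ m, (p m).Prime) :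
    (pUIdeal 𝒰 p).IsMaximal := by

  rw [Ideal.isMaximal_iff]
  constructor
  · intro h1
    have hmem : {m | (p m : ℤ) ∣ (1 : ℕ → ℤ) m} ∈ 𝒰 := h1
    obtain ⟨m, hm⟩ := Ultrafilter.nonempty_of_mem hmem
    have : (p m : ℤ) ∣ 1 := hm
    have := isUnit_of_dvd_one this
    simp [Int.isUnit_iff] at this
    have h2 := (hp m).one_lt
    omega
  · intro J x hIJ hxI hxJ
    have hS : {m | (p m : ℤ) ∣ x m}ᶜ ∈ 𝒰 := Ultrafilter.compl_mem_iff_notMem.2 hxI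
    have key : ∀ m, ¬ (p m : ℤ) ∣ x m → ∃ v : ℤ, (p m : ℤ) ∣ (1 - v * x m) := by
      intro m h
      have hpz : Prime (p m : ℤ) := Int.prime_iff_natAbs_prime.2 (by simpa using hp m)
      obtain ⟨u, v, huv⟩ := (hpz.coprime_iff_not_dvd.2 h)
      exact ⟨v, ⟨u, by linarith [huv]⟩⟩
    classical
    set v : ℕ → ℤ := fun m => if h : ¬ (p m : ℤ) ∣ x m then (key m h).choose else 0 with hv
    have h1 : (1 : ℕ → ℤ) - v * x ∈ pUIdeal 𝒰 p := by
      refine Filter.mem_of_superset hS ?_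
      intro m hm
      show (p m : ℤ) ∣ (1 - v m * x m)
      have : v m = (key m hm).choose := by rw [hv]; exact dif_pos hm
      rw [this]
      exact (key m hm).choose_spec
    have heq : (1 : ℕ → ℤ) = ((1 : ℕ → ℤ) - v * x) + v * x := by ring
    rw [heq]
    exact J.add_mem (hIJ h1) (J.mul_mem_left v hxJ)
end

section
/- Let 𝒰 be an ultrafilter on ℕ and let p : ℕ → ℕ be a sequence of prime numbers which is an infinite prime relative to 𝒰 (i.e. for every natural number q the set {m | p m = q} is not in 𝒰). Then the quotient ring (∏_{m∈ℕ} ℤ) ⧸ (p,𝒰) has characteristic zero. -/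
/-! An infinite prime `p` relative to `𝒰` tends to infinity along `𝒰`, so it eventually exceeds
every `n`; hence `p m ∣ n` on a set in `𝒰` forces `n = 0`. -/

/-- The image ultrafilter `𝒰.map f` is non-principal, hence lies below `cofinite = atTop`. -/
theorem Ultrafilter.tendsto_atTop_of_forall_preimage_singleton_notMem {α : Type*}
    (𝒰 : Ultrafilter α) (f : α → ℕ) (hf : ∀ q : ℕ, f ⁻¹' {q} ∉ 𝒰) :
    Filter.Tendsto f 𝒰 Filter.atTop := by
  rcases (𝒰.map f).le_cofinite_or_eq_pure with hcof | ⟨q, hq⟩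
  · exact hcof.trans_eq Nat.cofinite_eq_atTop
  · refine absurd ?_ (hf q)
    have hq_mem : {q} ∈ 𝒰.map f := hq ▸ Ultrafilter.mem_pure.mpr rfl
    exact Ultrafilter.mem_map.mp hq_mem

theorem natCast_mem_pUIdeal_iff (𝒰 : Ultrafilter ℕ) (p : ℕ → ℕ) (n : ℕ) :
    (n : ℕ → ℤ) ∈ pUIdeal 𝒰 p ↔ {m | p m ∣ n} ∈ 𝒰 := by
  change {m | (p m : ℤ) ∣ (n : ℕ → ℤ) m} ∈ 𝒰 ↔ _
  simp only [Pi.natCast_apply, Int.natCast_dvd_natCast]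

theorem residueField_charZero_general (𝒰 : Ultrafilter ℕ) (p : ℕ → ℕ)
    (hinf : ∀ q : ℕ, {m | p m = q} ∉ 𝒰) :
    CharZero ((ℕ → ℤ) ⧸ pUIdeal 𝒰 p) := by
  refine charZero_of_inj_zero fun n hn => ?_
  have hdvd : ∀ᶠ m in (𝒰 : Filter ℕ), p m ∣ n := by
    rw [← map_natCast (Ideal.Quotient.mk _), Ideal.Quotient.eq_zero_iff_mem] at hn
    exact (natCast_mem_pUIdeal_iff 𝒰 p n).mp hn
  have hlarge : ∀ᶠ m in (𝒰 : Filter ℕ), n < p m :=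
    (𝒰.tendsto_atTop_of_forall_preimage_singleton_notMem p hinf).eventually_gt_atTop n
  obtain ⟨m, hm_dvd, hm_lt⟩ := (hdvd.and hlarge).exists
  exact Nat.eq_zero_of_dvd_of_lt hm_dvd hm_lt

/-- If `p` is an infinite prime relative to the ultrafilter `𝒰`, then the nonstandard residue
field `(∏ ℤ) ⧸ (p, 𝒰)` has characteristic zero. -/
theorem residueField_charZero (𝒰 : Ultrafilter ℕ) (p : ℕ → ℕ)
    (hp : ∀ m, (p m).Prime) (hinf : ∀ q : ℕ, {m | p m = q} ∉ 𝒰) :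
    CharZero ((ℕ → ℤ) ⧸ pUIdeal 𝒰 p) :=
  residueField_charZero_general 𝒰 p hinf
end

section
/- Let I be a set and 𝒰 an ultrafilter on I. Then the set (𝒰) = {a ∈ ∏_{i∈I} ℤ | {i | a i = 0} ∈ 𝒰} is an ideal of the product ring ∏_{i∈I} ℤ which is a minimal prime ideal, i.e. (𝒰) is prime and is minimal among prime ideals of ∏_{i∈I} ℤ. -/
/-- The ideal `(𝒰)` of a product `∏ i, R i` of commutative rings, consisting of all `a` whose
zero set belongs to the ultrafilter `𝒰`. -/
def uIdeal {I : Type*} (𝒰 : Ultrafilter I) (R : I → Type*) [∀ i, CommRing (R i)] :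
    Ideal (∀ i, R i) where
  carrier := {a | {i | a i = 0} ∈ 𝒰}
  zero_mem' := by
    simp only [Set.mem_setOf_eq, Pi.zero_apply, Set.setOf_true]
    exact Filter.univ_mem
  add_mem' := by
    intro a b ha hb
    have := Filter.inter_mem ha hb
    refine Filter.mem_of_superset this ?_
    rintro i ⟨h1, h2⟩
    have h1' : a i = 0 := h1
    have h2' : b i = 0 := h2
    show a i + b i = 0
    rw [h1', h2', add_zero]
  smul_mem' := by
    intro c a ha
    refine Filter.mem_of_superset ha ?_
    intro i hi
    have hi' : a i = 0 := hi
    show c i • a i = 0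
    rw [hi', smul_zero]

/-- For any ultrafilter `𝒰` on a set `I`, the ideal `(𝒰)` of the product ring `∏_{i ∈ I} ℤ` is a
minimal prime ideal: it is prime, and it is minimal among the prime ideals. -/
theorem uIdeal_int_minimal_prime {I : Type*} (𝒰 : Ultrafilter I) :
    (uIdeal 𝒰 (fun _ : I => ℤ)).IsPrime ∧
      ∀ J : Ideal (∀ _ : I, ℤ), J.IsPrime → J ≤ uIdeal 𝒰 (fun _ : I => ℤ) →
        J = uIdeal 𝒰 (fun _ : I => ℤ) := by
  have hmem : ∀ a : ∀ _ : I, ℤ, a ∈ uIdeal 𝒰 (fun _ : I => ℤ) ↔ {i | a i = 0} ∈ 𝒰 :=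
    fun a => Iff.rfl
  have hprime : (uIdeal 𝒰 (fun _ : I => ℤ)).IsPrime := by
    constructor
    · intro h
      have h1 : {i | (1 : ∀ _ : I, ℤ) i = 0} ∈ 𝒰 := (Ideal.eq_top_iff_one _).mp h
      simp only [Pi.one_apply, one_ne_zero, Set.setOf_false] at h1
      exact Ultrafilter.empty_notMem h1
    · intro a b hab
      rw [hmem] at hab
      have : {i | a i = 0} ∪ {i | b i = 0} ∈ 𝒰 := by
        refine Filter.mem_of_superset hab ?_
        intro i hi
        have : a i * b i = 0 := hi
        rcases mul_eq_zero.mp this with h | h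
        · exact Or.inl h
        · exact Or.inr h
      rcases Ultrafilter.union_mem_iff.mp this with h | h
      · exact Or.inl h
      · exact Or.inr h
  refine ⟨hprime, fun J hJ hle => le_antisymm hle ?_⟩
  intro a ha
  rw [hmem] at ha
  set b : ∀ _ : I, ℤ := fun i => if a i = 0 then 1 else 0 with hb
  have hab : a * b = 0 := by
    funext i
    by_cases h : a i = 0 <;> simp [hb, h]
  have hbnot : b ∉ uIdeal 𝒰 (fun _ : I => ℤ) := by
    rw [hmem]
    intro hbmem
    have : {i | a i = 0} ∩ {i | b i = 0} ∈ 𝒰 := Filter.inter_mem ha hbmem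
    rcases 𝒰.nonempty_of_mem this with ⟨i, h1, h2⟩
    have h1' : a i = 0 := h1
    have : b i = 1 := by simp [hb, h1']
    simp only [Set.mem_setOf_eq] at h2
    rw [h2] at this
    exact zero_ne_one this
  have hbJ : b ∉ J := fun h => hbnot (hle h)
  have : a * b ∈ J := by rw [hab]; exact J.zero_mem
  rcases hJ.mem_or_mem this with h | h
  · exact h
  · exact absurd h hbJ
end

section
/- Let I be a set. The assignment sending an ultrafilter 𝒰 on I to the ideal (𝒰) = {a ∈ ∏_{i∈I} ℤ | {i | a i = 0} ∈ 𝒰} is a bijection from the set of ultrafilters on I onto the set of minimal prime ideals of the product ring ∏_{i∈I} ℤ; in particular, every minimal prime ideal of ∏_{i∈I} ℤ is of the form (𝒰) for a unique ultrafilter 𝒰. -/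
section Aux
variable {I : Type*}

open Classical in
/-- The function which is `0` on `S` and `1` off `S`. Its zero set is exactly `S`. -/
private noncomputable def eS (S : Set I) : ∀ _ : I, ℤ := fun i => if i ∈ S then 0 else 1

private lemma eS_of_mem {S : Set I} {i : I} (h : i ∈ S) : eS S i = 0 := by
  simp only [eS]; exact if_pos h

private lemma eS_of_notMem {S : Set I} {i : I} (h : i ∉ S) : eS S i = 1 := by
  simp only [eS]; exact if_neg h

private lemma eS_zeroSet (S : Set I) : {i | eS S i = 0} = S := by
  ext i; by_cases h : i ∈ S <;> simp [eS_of_mem, eS_of_notMem, h]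

private lemma mem_uIdeal_iff (𝒰 : Ultrafilter I) (a : ∀ _ : I, ℤ) :
    a ∈ uIdeal 𝒰 (fun _ : I => ℤ) ↔ {i | a i = 0} ∈ 𝒰 := Iff.rfl

private lemma eS_mem_uIdeal_iff (𝒰 : Ultrafilter I) (S : Set I) :
    eS S ∈ uIdeal 𝒰 (fun _ : I => ℤ) ↔ S ∈ 𝒰 := by
  rw [mem_uIdeal_iff, eS_zeroSet]

private lemma eq_mul_eS (a : ∀ _ : I, ℤ) : a = a * eS {i | a i = 0} := by
  funext i
  by_cases h : a i = 0 <;> simp [eS_of_mem, eS_of_notMem, h]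

private lemma eS_mul_eS_compl (S : Set I) : eS S * eS Sᶜ = 0 := by
  funext i
  by_cases h : i ∈ S <;> simp [eS_of_mem, eS_of_notMem, h]

private lemma uIdeal_isPrime (𝒰 : Ultrafilter I) : (uIdeal 𝒰 (fun _ : I => ℤ)).IsPrime := by
  constructor
  · intro h
    have h1 : (1 : ∀ _ : I, ℤ) ∈ uIdeal 𝒰 (fun _ : I => ℤ) := h ▸ Submodule.mem_top
    have : {i : I | (1 : ℤ) = 0} ∈ 𝒰 := h1
    simp at this
  · intro a b hab
    have : {i | a i = 0} ∪ {i | b i = 0} ∈ 𝒰 := by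
      refine Filter.mem_of_superset hab fun i hi => ?_
      exact mul_eq_zero.mp hi
    exact (Ultrafilter.union_mem_iff.mp this).imp id id

private lemma uIdeal_le_of_prime_le (𝒰 : Ultrafilter I) (Q : Ideal (∀ _ : I, ℤ)) (hQ : Q.IsPrime)
    (hle : Q ≤ uIdeal 𝒰 (fun _ : I => ℤ)) : uIdeal 𝒰 (fun _ : I => ℤ) ≤ Q := by
  intro a ha
  set S := {i | a i = 0} with hS
  have hSU : S ∈ 𝒰 := ha
  have h0 : eS S * eS Sᶜ = 0 := eS_mul_eS_compl S
  rcases hQ.mem_or_mem (h0 ▸ Q.zero_mem) with h | h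
  · rw [eq_mul_eS a]
    exact Q.mul_mem_left a h
  · exfalso
    have : Sᶜ ∈ 𝒰 := (eS_mem_uIdeal_iff 𝒰 Sᶜ).mp (hle h)
    exact (Ultrafilter.compl_mem_iff_notMem.mp this) hSU

/-- The filter associated to a prime ideal of `∏ I, ℤ`. -/
private def primeToFilter (P : Ideal (∀ _ : I, ℤ)) : Filter I where
  sets := {S | eS S ∈ P}
  univ_sets := by
    have : eS (Set.univ : Set I) = 0 := by funext i; simp [eS_of_mem]
    show eS (Set.univ : Set I) ∈ P
    rw [this]
    exact P.zero_mem
  sets_of_superset := by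
    intro S T hS hST
    have : eS T = eS T * eS S := by
      funext i
      by_cases h : i ∈ S
      · simp [eS_of_mem, h, hST h]
      · by_cases h' : i ∈ T <;> simp [eS_of_mem, eS_of_notMem, h, h']
    show eS T ∈ P
    rw [this]
    exact P.mul_mem_left _ hS
  inter_sets := by
    intro S T hS hT
    have : eS (S ∩ T) = eS S + eS T - eS S * eS T := by
      funext i
      by_cases h : i ∈ S <;> by_cases h' : i ∈ T <;> simp [eS_of_mem, eS_of_notMem, h, h']
    show eS (S ∩ T) ∈ P
    rw [this]
    exact sub_mem (add_mem hS hT) (P.mul_mem_left _ hT)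

private lemma mem_primeToFilter (P : Ideal (∀ _ : I, ℤ)) (S : Set I) :
    S ∈ primeToFilter P ↔ eS S ∈ P := Iff.rfl

/-- The ultrafilter associated to a prime ideal of `∏ I, ℤ`. -/
private def primeToUltra (P : Ideal (∀ _ : I, ℤ)) (hP : P.IsPrime) : Ultrafilter I :=
  Ultrafilter.ofComplNotMemIff (primeToFilter P) (by
    intro S
    rw [mem_primeToFilter, mem_primeToFilter]
    constructor
    · intro h
      rcases hP.mem_or_mem ((eS_mul_eS_compl S) ▸ P.zero_mem) with h' | h'
      · exact h'
      · exact absurd h' h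
    · intro hS hSc
      have h1 : eS S + eS Sᶜ = 1 := by
        funext i
        by_cases h : i ∈ S <;> simp [eS_of_mem, eS_of_notMem, h]
      exact hP.ne_top (P.eq_top_iff_one.mpr (h1 ▸ add_mem hS hSc)))

private lemma mem_primeToUltra (P : Ideal (∀ _ : I, ℤ)) (hP : P.IsPrime) (S : Set I) :
    S ∈ primeToUltra P hP ↔ eS S ∈ P := Iff.rfl

private lemma uIdeal_primeToUltra_le (P : Ideal (∀ _ : I, ℤ)) (hP : P.IsPrime) :
    uIdeal (primeToUltra P hP) (fun _ : I => ℤ) ≤ P := by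
  intro a ha
  have hS : eS {i | a i = 0} ∈ P := (mem_primeToUltra P hP _).mp ha
  rw [eq_mul_eS a]
  exact P.mul_mem_left a hS

end Aux

/-- The assignment `𝒰 ↦ (𝒰)` is a bijection from the set of ultrafilters on `I` onto the set of
minimal prime ideals of the product ring `∏_{i ∈ I} ℤ`: it is injective, and its range is exactly
the set of minimal primes. -/
theorem uIdeal_int_bijection_minimalPrimes (I : Type*) :
    Function.Injective (fun 𝒰 : Ultrafilter I => uIdeal 𝒰 (fun _ : I => ℤ)) ∧
      Set.range (fun 𝒰 : Ultrafilter I => uIdeal 𝒰 (fun _ : I => ℤ)) =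
        minimalPrimes (∀ _ : I, ℤ) := by
  constructor
  · intro 𝒰 𝒱 h
    simp only at h
    apply Ultrafilter.coe_injective
    apply Filter.ext
    intro S
    constructor
    · intro hS
      exact (eS_mem_uIdeal_iff 𝒱 S).mp (h ▸ (eS_mem_uIdeal_iff 𝒰 S).mpr hS)
    · intro hS
      exact (eS_mem_uIdeal_iff 𝒰 S).mp (h.symm ▸ (eS_mem_uIdeal_iff 𝒱 S).mpr hS)
  · ext P
    constructor
    · rintro ⟨𝒰, rfl⟩
      refine ⟨⟨uIdeal_isPrime 𝒰, bot_le⟩, ?_⟩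
      rintro Q ⟨hQp, -⟩ hle
      exact uIdeal_le_of_prime_le 𝒰 Q hQp hle
    · intro hP
      obtain ⟨⟨hPp, -⟩, hmin⟩ := hP
      refine ⟨primeToUltra P hPp, ?_⟩
      simp only
      apply le_antisymm
      · exact uIdeal_primeToUltra_le P hPp
      · exact hmin ⟨uIdeal_isPrime _, bot_le⟩ (uIdeal_primeToUltra_le P hPp)
end
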